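/- If a level equation l₁ ≐ l₂ has variables occurring on both sides (i.e., l₁ contains some variable and l₂ contains some variable), and is in canonical form, then it admits a unifier: taking i₁ a variable of l₁ and i₂ a variable of l₂, p = max(l₁⟨0⟩, l₂⟨0⟩), the substitution mapping i₁ to the constant p − l₁⟨i₁⟩, i₂ to the constant p − l₂⟨i₂⟩, and all other variables to 0, is a unifier. -/

import Mathlib

/-!
Put `p = max(l₁⟨0⟩, l₂⟨0⟩)`. Because the equation is canonical, each variable has a single
coefficient across both sides, and every coefficient is at most `p`. Raising `i₁` and `i₂` just
enough that their atoms reach `p` (and sending every other variable to `0`) therefore makes every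
atom on either side evaluate to at most `p`, while `c₁ + i₁` on the left and `c₂ + i₂` on the right
evaluate to exactly `p`: both sides evaluate to `p`, whatever the assignment.
-/

/-- Universe level expressions: `l ::= i | 0 | S l | l ⊔ l'`. -/
inductive Lvl : Type
  | var : ℕ → Lvl
  | zero : Lvl
  | succ : Lvl → Lvl
  | max : Lvl → Lvl → Lvl
  deriving DecidableEq

namespace Lvl

/-- Interpretation of a level under an assignment `φ` of naturals to variables. -/
def eval (φ : ℕ → ℕ) : Lvl → ℕ
  | .var i => φ i
  | .zero => 0
  | .succ l => l.eval φ + 1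
  | .max a b => Nat.max (a.eval φ) (b.eval φ)

/-- Semantic equivalence: equal value under every assignment. -/
def Equiv (l l' : Lvl) : Prop := ∀ φ : ℕ → ℕ, l.eval φ = l'.eval φ

/-- Application of a level substitution. -/
def subst (θ : ℕ → Lvl) : Lvl → Lvl
  | .var i => θ i
  | .zero => .zero
  | .succ l => .succ (l.subst θ)
  | .max a b => .max (a.subst θ) (b.subst θ)

/-- Free variables of a level. -/
def fv : Lvl → Finset ℕ
  | .var i => {i}
  | .zero => ∅
  | .succ l => l.fv
  | .max a b => a.fv ∪ b.fv

/-- The constant level `n`, i.e. `Sⁿ 0`. -/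
def const (n : ℕ) : Lvl := Lvl.succ^[n] Lvl.zero

/-- The level `n + i`, i.e. `Sⁿ i`. -/
def atom (n i : ℕ) : Lvl := Lvl.succ^[n] (Lvl.var i)

end Lvl

/-- `θ` is a unifier of the equation `l₁ ≐ l₂`. -/
def Unifies (θ : ℕ → Lvl) (l₁ l₂ : Lvl) : Prop := Lvl.Equiv (l₁.subst θ) (l₂.subst θ)

/-- `θ` is a most general unifier of the equation `l₁ ≐ l₂`. -/
def IsMGU (θ : ℕ → Lvl) (l₁ l₂ : Lvl) : Prop :=
  Unifies θ l₁ l₂ ∧ ∀ τ, Unifies τ l₁ l₂ →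
    ∃ θ' : ℕ → Lvl, ∀ i ∈ l₁.fv ∪ l₂.fv, Lvl.Equiv ((θ i).subst θ') (τ i)

/-- The level `p ⊔ (n₁ + i₁) ⊔ ... ⊔ (n_m + i_m)` given by canonical-form data. -/
def buildCanon (p : ℕ) (L : List (ℕ × ℕ)) : Lvl :=
  L.foldr (fun a acc => Lvl.max (Lvl.atom a.1 a.2) acc) (Lvl.const p)

/-- The equation `buildCanon p₁ L₁ ≐ buildCanon p₂ L₂` is in canonical form:
both sides canonical (coefficients bounded by the constant coefficient, variables
pairwise distinct), shared variables have equal coefficients on both sides, and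
some coefficient on some side equals `0`. -/
def CanonEqn (p₁ : ℕ) (L₁ : List (ℕ × ℕ)) (p₂ : ℕ) (L₂ : List (ℕ × ℕ)) : Prop :=
  (∀ a ∈ L₁, a.1 ≤ p₁) ∧ (L₁.map Prod.snd).Nodup ∧
  (∀ a ∈ L₂, a.1 ≤ p₂) ∧ (L₂.map Prod.snd).Nodup ∧
  (∀ a ∈ L₁, ∀ b ∈ L₂, a.2 = b.2 → a.1 = b.1) ∧
  0 ∈ (p₁ :: p₂ :: (L₁ ++ L₂).map Prod.fst)

namespace Lvl

@[simp]
lemma eval_const (φ : ℕ → ℕ) (n : ℕ) : (const n).eval φ = n := by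
  induction n with
  | zero => rfl
  | succ n ih =>
    rw [const, Function.iterate_succ_apply']
    exact congrArg (· + 1) ih

@[simp]
lemma eval_atom (φ : ℕ → ℕ) (n i : ℕ) : (atom n i).eval φ = n + φ i := by
  induction n with
  | zero => simp [atom, eval]
  | succ n ih =>
    rw [atom, Function.iterate_succ_apply']
    change (atom n i).eval φ + 1 = _
    omega

lemma eval_subst (θ : ℕ → Lvl) (φ : ℕ → ℕ) :
    ∀ l : Lvl, (l.subst θ).eval φ = l.eval (fun i => (θ i).eval φ)
  | .var _ => rfl
  | .zero => rfl
  | .succ l => congrArg (· + 1) (eval_subst θ φ l)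
  | .max a b => by simp only [subst, eval, eval_subst θ φ a, eval_subst θ φ b]

end Lvl

section buildCanon

variable {φ : ℕ → ℕ} {p m : ℕ} {L : List (ℕ × ℕ)}

@[simp]
lemma eval_buildCanon_cons (a : ℕ × ℕ) :
    (buildCanon p (a :: L)).eval φ = Nat.max (a.1 + φ a.2) ((buildCanon p L).eval φ) := by
  simp [buildCanon, Lvl.eval]

lemma eval_buildCanon_le (hp : p ≤ m) (hL : ∀ a ∈ L, a.1 + φ a.2 ≤ m) :
    (buildCanon p L).eval φ ≤ m := by
  induction L with
  | nil => simpa [buildCanon] using hp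
  | cons a L ih =>
    simp only [List.forall_mem_cons] at hL
    simpa using ⟨hL.1, ih hL.2⟩

lemma le_eval_buildCanon {a : ℕ × ℕ} (ha : a ∈ L) : a.1 + φ a.2 ≤ (buildCanon p L).eval φ := by
  induction L with
  | nil => simp at ha
  | cons b L ih =>
    rw [eval_buildCanon_cons]
    rcases List.mem_cons.1 ha with rfl | ha
    · exact Nat.le_max_left _ _
    · exact (ih ha).trans (Nat.le_max_right _ _)

lemma eval_buildCanon_eq {a : ℕ × ℕ} (hp : p ≤ m) (hL : ∀ b ∈ L, b.1 + φ b.2 ≤ m)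
    (ha : a ∈ L) (hm : a.1 + φ a.2 = m) : (buildCanon p L).eval φ = m :=
  le_antisymm (eval_buildCanon_le hp hL) (hm ▸ le_eval_buildCanon ha)

end buildCanon

namespace CanonEqn

variable {p₁ p₂ : ℕ} {L₁ L₂ : List (ℕ × ℕ)} {a b : ℕ × ℕ}

lemma fst_eq_of_snd_eq (h : CanonEqn p₁ L₁ p₂ L₂) (ha : a ∈ L₁ ++ L₂) (hb : b ∈ L₁ ++ L₂)
    (hab : a.2 = b.2) : a.1 = b.1 := by
  obtain ⟨-, hnd₁, -, hnd₂, hsh, -⟩ := h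
  rcases List.mem_append.1 ha with ha | ha <;> rcases List.mem_append.1 hb with hb | hb
  · rw [List.inj_on_of_nodup_map hnd₁ ha hb hab]
  · exact hsh a ha b hb hab
  · exact (hsh b hb a ha hab.symm).symm
  · rw [List.inj_on_of_nodup_map hnd₂ ha hb hab]

lemma fst_le_max (h : CanonEqn p₁ L₁ p₂ L₂) (ha : a ∈ L₁ ++ L₂) : a.1 ≤ Nat.max p₁ p₂ := by
  obtain ⟨hb₁, -, hb₂, -⟩ := h
  rcases List.mem_append.1 ha with ha | ha
  · exact (hb₁ a ha).trans (Nat.le_max_left _ _)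
  · exact (hb₂ a ha).trans (Nat.le_max_right _ _)

end CanonEqn

/-- The assignment raising the atoms `c₁ + i₁` and `c₂ + i₂` to `p`. -/
def raiseTo (p c₁ i₁ c₂ i₂ : ℕ) (j : ℕ) : ℕ :=
  if j = i₁ then p - c₁ else if j = i₂ then p - c₂ else 0

section raiseTo

variable {M : List (ℕ × ℕ)} {p c₁ i₁ c₂ i₂ : ℕ} {a : ℕ × ℕ}

lemma fst_add_raiseTo_eq (hcoef : ∀ a ∈ M, ∀ b ∈ M, a.2 = b.2 → a.1 = b.1)
    (hle : ∀ a ∈ M, a.1 ≤ p) (h₁ : (c₁, i₁) ∈ M) (h₂ : (c₂, i₂) ∈ M) (ha : a ∈ M)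
    (hi : a.2 = i₁ ∨ a.2 = i₂) : a.1 + raiseTo p c₁ i₁ c₂ i₂ a.2 = p := by
  have := hle a ha
  unfold raiseTo
  split_ifs with e₁ e₂
  · have := hcoef a ha _ h₁ e₁
    omega
  · have := hcoef a ha _ h₂ (hi.resolve_left e₁)
    omega
  · exact (hi.elim e₁ e₂).elim

lemma fst_add_raiseTo_le (hcoef : ∀ a ∈ M, ∀ b ∈ M, a.2 = b.2 → a.1 = b.1)
    (hle : ∀ a ∈ M, a.1 ≤ p) (h₁ : (c₁, i₁) ∈ M) (h₂ : (c₂, i₂) ∈ M) (ha : a ∈ M) :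
    a.1 + raiseTo p c₁ i₁ c₂ i₂ a.2 ≤ p := by
  by_cases hi : a.2 = i₁ ∨ a.2 = i₂
  · exact (fst_add_raiseTo_eq hcoef hle h₁ h₂ ha hi).le
  · simpa [raiseTo, not_or.1 hi] using hle a ha

end raiseTo

/-- If a level equation in canonical form has variables on both sides, then it
admits a unifier: with `i₁` a variable of `l₁` (of coefficient `c₁`), `i₂` a
variable of `l₂` (of coefficient `c₂`) and `p = max(l₁⟨0⟩, l₂⟨0⟩)`, the
substitution mapping `i₁` to the constant `p − c₁`, `i₂` to the constant `p − c₂`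
and every other variable to `0` is a unifier. -/
theorem unifier_of_vars_both_sides (p₁ p₂ : ℕ) (L₁ L₂ : List (ℕ × ℕ))
    (hcanon : CanonEqn p₁ L₁ p₂ L₂)
    (c₁ i₁ : ℕ) (h₁ : (c₁, i₁) ∈ L₁) (c₂ i₂ : ℕ) (h₂ : (c₂, i₂) ∈ L₂) :
    Unifies
      (fun j =>
        if j = i₁ then Lvl.const (Nat.max p₁ p₂ - c₁)
        else if j = i₂ then Lvl.const (Nat.max p₁ p₂ - c₂)
        else Lvl.zero)
      (buildCanon p₁ L₁) (buildCanon p₂ L₂) := by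
  intro φ
  set p := Nat.max p₁ p₂
  have hθ : (fun j => (if j = i₁ then Lvl.const (p - c₁)
      else if j = i₂ then Lvl.const (p - c₂) else Lvl.zero).eval φ) = raiseTo p c₁ i₁ c₂ i₂ := by
    funext j
    unfold raiseTo
    split_ifs <;> simp [Lvl.eval]
  rw [Lvl.eval_subst, Lvl.eval_subst, hθ]
  have h₁' := List.mem_append_left L₂ h₁
  have h₂' := List.mem_append_right L₁ h₂
  have hcoef (a) (ha : a ∈ L₁ ++ L₂) (b) (hb : b ∈ L₁ ++ L₂) := hcanon.fst_eq_of_snd_eq ha hb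
  have hle (a) (ha : a ∈ L₁ ++ L₂) := hcanon.fst_le_max ha
  have hbound (a) (ha : a ∈ L₁ ++ L₂) := fst_add_raiseTo_le hcoef hle h₁' h₂' ha
  have htop (a) (ha : a ∈ L₁ ++ L₂) := fst_add_raiseTo_eq hcoef hle h₁' h₂' ha
  have hleft := eval_buildCanon_eq (Nat.le_max_left p₁ p₂)
    (fun a ha => hbound a (List.mem_append_left L₂ ha)) h₁ (htop _ h₁' (.inl rfl))
  have hright := eval_buildCanon_eq (Nat.le_max_right p₁ p₂)
    (fun a ha => hbound a (List.mem_append_right L₁ ha)) h₂ (htop _ h₂' (.inr rfl))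
  exact hleft.trans hright.symm
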